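/- Let M be a loopless matroid with weights x : E → ℝ, B an x-optimal basis, and e ∉ B. Then x(e) ≥ μ_e(x), and μ_e(x) equals the maximum weight of an element in the fundamental path P(e,B) = {f ∈ B : (B - f) + e is a basis}. -/

import Mathlib

open Matroid Set

variable {α : Type*}

/-- A circuit of a matroid: a minimal dependent set. -/
def Matroid.PaperIsCircuit (M : Matroid α) (C : Set α) : Prop :=
  M.Dep C ∧ ∀ ⦃D⦄, D ⊂ C → M.Indep D

/-- Looplessness in the sense of the paper: no element is a loop
(every singleton of the ground set is independent) and no element is a
coloop (no element lies in all bases). -/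
def Matroid.PaperLoopless (M : Matroid α) : Prop :=
  ∀ e ∈ M.E, M.Indep {e} ∧ ∃ B, M.IsBase B ∧ e ∉ B

/-- The weight `x(B)` of a set of ground elements. -/
noncomputable def setWeight (x : α → ℝ) (B : Set α) : ℝ := ∑ᶠ e ∈ B, x e

/-- The min-max weight `μ_e(x)`: the minimum over circuits `C` containing `e`
of the maximum weight of an element of `C - e`. -/
noncomputable def muWeight (M : Matroid α) (x : α → ℝ) (e : α) : ℝ :=
  sInf {w | ∃ C, M.PaperIsCircuit C ∧ e ∈ C ∧ w = sSup (x '' (C \ {e}))}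

/-- The bottleneck weight `b_e(x) = min {x(e), μ_e(x)}`. -/
noncomputable def bottleneck (M : Matroid α) (x : α → ℝ) (e : α) : ℝ :=
  min (x e) (muWeight M x e)

/-- The minimum weight of a basis of `M`. -/
noncomputable def mwb (M : Matroid α) (x : α → ℝ) : ℝ :=
  sInf {w | ∃ B, M.IsBase B ∧ w = setWeight x B}

/-- `B` is an `x`-optimal basis of `M`. -/
def IsOptimalBase (M : Matroid α) (x : α → ℝ) (B : Set α) : Prop :=
  M.IsBase B ∧ ∀ B', M.IsBase B' → setWeight x B ≤ setWeight x B'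

/-- Deletion of a single element. -/
noncomputable def Matroid.del (M : Matroid α) (e : α) : Matroid α :=
  M ↾ (M.E \ {e})

/-- Contraction of a single element, defined by duality: `M/e = (M✶ \ e)✶`. -/
noncomputable def Matroid.con (M : Matroid α) (e : α) : Matroid α :=
  ((M✶ ↾ (M.E \ {e}))✶)

/-!
The fundamental path `P(e,B)` is `C(e,B) - e` for the fundamental circuit `C(e,B)` of `e`
in `B`, so `μ_e(x) ≤ max x(P(e,B))`. Conversely, if `f ∈ P(e,B)` and `C` is any circuit
through `e`, then `C - e` is not contained in the closure of `B - f` (which misses `e`),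
so some `g ∈ C - e` can replace `f` in `B`; optimality of `B` gives `x(f) ≤ x(g)`. The same
exchange with `g = e` gives `x(f) ≤ x(e)`. Since `e` is not a loop, `P(e,B)` is nonempty, so
the maximum is a genuine one rather than the junk value `sSup ∅ = 0`.
-/

namespace Matroid

variable {M : Matroid α} {B C : Set α} {e f : α}

lemma paperIsCircuit_iff_isCircuit : M.PaperIsCircuit C ↔ M.IsCircuit C :=
  isCircuit_iff_forall_ssubset.symm

lemma IsBase.insert_sdiff_isBase_iff_mem_fundCircuit (hB : M.IsBase B) (he : e ∈ M.E)
    (heB : e ∉ B) (hfB : f ∈ B) :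
    M.IsBase (insert e (B \ {f})) ↔ f ∈ M.fundCircuit e B := by
  rw [hB.indep.mem_fundCircuit_iff (by rwa [hB.closure_eq]) heB,
    ← insert_sdiff_singleton_comm (ne_of_mem_of_not_mem hfB heB).symm]
  exact ⟨IsBase.indep, hB.exchange_isBase_of_indep heB⟩

lemma IsBase.setOf_insert_sdiff_isBase_eq_fundCircuit_sdiff (hB : M.IsBase B) (he : e ∈ M.E)
    (heB : e ∉ B) :
    {f ∈ B | M.IsBase (insert e (B \ {f}))} = M.fundCircuit e B \ {e} := by
  rw [fundCircuit_sdiff_eq_inter M heB]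
  ext f
  rw [mem_ofPred_eq, mem_inter_iff, and_comm]
  exact and_congr_left (hB.insert_sdiff_isBase_iff_mem_fundCircuit he heB)

lemma IsBase.exists_isBase_insert_sdiff_of_isCircuit (hB : M.IsBase B) (hfB : f ∈ B)
    (heB : e ∉ B) (hf : M.IsBase (insert e (B \ {f}))) (hC : M.IsCircuit C) (heC : e ∈ C) :
    ∃ g ∈ C \ {e}, M.IsBase (insert g (B \ {f})) := by
  have hecl : e ∉ M.closure (B \ {f}) :=
    (((hB.indep.sdiff _).insert_indep_iff_of_notMem fun he ↦ heB he.1).1 hf.indep).2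
  have hCe : ¬ C \ {e} ⊆ M.closure (B \ {f}) := fun hsub ↦ hecl <|
    M.closure_subset_closure_of_subset_closure hsub (hC.mem_closure_sdiff_singleton_of_mem heC)
  obtain ⟨g, hg, hgcl⟩ := not_subset.1 hCe
  exact ⟨g, hg, hB.exchange_base_of_notMem_closure hfB hgcl (hC.subset_ground hg.1)⟩

end Matroid

lemma setWeight_insert_sdiff_add (x : α → ℝ) {B : Set α} (hB : B.Finite) {f g : α}
    (hf : f ∈ B) (hg : g ∉ B \ {f}) :
    setWeight x (insert g (B \ {f})) + x f = setWeight x B + x g := by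
  have hB' : setWeight x B = x f + setWeight x (B \ {f}) := by
    conv_lhs => rw [← insert_sdiff_self_of_mem hf]
    exact finsum_mem_insert x (fun h ↦ h.2 rfl) hB.sdiff
  rw [hB', setWeight, finsum_mem_insert x hg hB.sdiff, setWeight]
  ring

namespace IsOptimalBase

variable {M : Matroid α} [M.Finite] {x : α → ℝ} {B C : Set α} {e f g : α}

lemma le_of_isBase_insert_sdiff (hB : IsOptimalBase M x B) (hf : f ∈ B)
    (hg : M.IsBase (insert g (B \ {f}))) : x f ≤ x g := by
  have hgB : g ∉ B \ {f} := fun hgB ↦ by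
    rw [insert_eq_of_mem hgB] at hg
    exact (hg.eq_of_subset_isBase hB.1 sdiff_subset ▸ hf).2 rfl
  have := setWeight_insert_sdiff_add x (M.set_finite B hB.1.subset_ground) hf hgB
  linarith [hB.2 _ hg]

lemma le_sSup_of_isCircuit (hB : IsOptimalBase M x B) (hfB : f ∈ B) (heB : e ∉ B)
    (hf : M.IsBase (insert e (B \ {f}))) (hC : M.IsCircuit C) (heC : e ∈ C) :
    x f ≤ sSup (x '' (C \ {e})) := by
  obtain ⟨g, hg, hgB⟩ := hB.1.exists_isBase_insert_sdiff_of_isCircuit hfB heB hf hC heC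
  calc x f ≤ x g := hB.le_of_isBase_insert_sdiff hfB hgB
    _ ≤ sSup (x '' (C \ {e})) :=
      le_csSup ((M.set_finite C hC.subset_ground).sdiff.image x).bddAbove (mem_image_of_mem x hg)

end IsOptimalBase

/-- for an optimal basis `B` and `e ∉ B`, `x(e) ≥ μ_e(x)` and
`μ_e(x)` is the maximum weight of an element of the fundamental path of `e`. -/
theorem stmt7 (M : Matroid α) [M.Finite] (hM : M.PaperLoopless)
    (x : α → ℝ) {B : Set α} (hB : IsOptimalBase M x B)
    {e : α} (he : e ∈ M.E) (heB : e ∉ B) :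
    x e ≥ muWeight M x e ∧
      muWeight M x e = sSup (x '' {f ∈ B | M.IsBase (insert e (B \ {f}))}) := by
  set P := {f ∈ B | M.IsBase (insert e (B \ {f}))}
  have hC : M.IsCircuit (M.fundCircuit e B) := hB.1.fundCircuit_isCircuit he heB
  have hP : M.fundCircuit e B \ {e} = P :=
    (hB.1.setOf_insert_sdiff_isBase_eq_fundCircuit_sdiff he heB).symm
  have hPne : P.Nonempty := hP ▸ nonempty_iff_ne_empty.2 fun h ↦
    hC.not_indep ((hM e he).1.subset (sdiff_eq_empty.1 h))
  have hmu : muWeight M x e = sSup (x '' P) := by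
    refine IsLeast.csInf_eq
      ⟨⟨_, paperIsCircuit_iff_isCircuit.2 hC, M.mem_fundCircuit e B, by rw [hP]⟩, ?_⟩
    rintro _ ⟨C, hC', heC, rfl⟩
    exact csSup_le (hPne.image x) (forall_mem_image.2 fun f hf ↦
      hB.le_sSup_of_isCircuit hf.1 heB hf.2 (paperIsCircuit_iff_isCircuit.1 hC') heC)
  refine ⟨?_, hmu⟩
  rw [hmu]
  exact csSup_le (hPne.image x) (forall_mem_image.2 fun f hf ↦
    hB.le_of_isBase_insert_sdiff hf.1 hf.2)
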